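/- Let A = [A₀ I] with A₀ an m×n real matrix, b ∈ ℝ^m, c ∈ ℝ^{m+n} with last m entries zero, and let (B,N) be a partition of {1,…,m+n} with |B| = m and A_B invertible. Set Q = A_B⁻¹A_N, p = A_B⁻¹b, q = c_N − A_Nᵀ A_B⁻ᵀ c_B, z* = c_Bᵀ A_B⁻¹ b. Then for y ∈ ℝ^{m+n} and w ∈ ℝ, the conditions y_N = −q + Qᵀ y_B and w = z* + pᵀ y_B hold if and only if y_N' = A₀ᵀ y_B' − c₀ and w = bᵀ y_B', where y_N' ∈ ℝ^n denotes the first n coordinates of y, y_B' ∈ ℝ^m the last m coordinates, and c₀ ∈ ℝ^n the first n entries of c. -/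

import Mathlib

/-!
Both dictionaries describe the same set: the pairs `(y, w)` for which some dual vector `s`
satisfies `y = Aᵀ s - c` and `w = bᵀ s`. The slack columns of `A = [A₀ I]` force `s` to be the
last `m` coordinates of `y`, which yields the initial dual dictionary; the basic columns force
`s = A_B⁻ᵀ (c_B + y_B)`, and substituting this `s` into the nonbasic rows and the objective
yields the negative-transpose dictionary.
-/

open Matrix

namespace Matrix

variable {K : Type*} [CommRing K] {ι κ β ν : Type*} [Fintype ι]

theorem eq_transpose_mulVec_sub_iff_of_equiv_sum (A : Matrix ι κ K) (e : β ⊕ ν ≃ κ)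
    (c y : κ → K) (s : ι → K) :
    y = Aᵀ *ᵥ s - c ↔
      (fun i => y (e (Sum.inl i))) =
          (A.submatrix id (fun i => e (Sum.inl i)))ᵀ *ᵥ s - (fun i => c (e (Sum.inl i))) ∧
        (fun j => y (e (Sum.inr j))) =
          (A.submatrix id (fun j => e (Sum.inr j)))ᵀ *ᵥ s - (fun j => c (e (Sum.inr j))) := by
  simp only [funext_iff, ← e.forall_congr_right, Sum.forall]
  rfl

variable [DecidableEq ι]

theorem eq_transpose_mulVec_sub_iff_of_isUnit {M : Matrix ι ι K} (hM : IsUnit M)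
    (u v s : ι → K) : u = Mᵀ *ᵥ s - v ↔ s = M⁻¹ᵀ *ᵥ (v + u) := by
  have hdet := (isUnit_iff_isUnit_det M).mp hM
  constructor
  · rintro rfl
    rw [add_sub_cancel, mulVec_mulVec, ← transpose_mul, mul_nonsing_inv M hdet, transpose_one,
      one_mulVec]
  · rintro rfl
    rw [mulVec_mulVec, ← transpose_mul, nonsing_inv_mul M hdet, transpose_one, one_mulVec,
      add_sub_cancel_left]

theorem neg_sub_add_transpose_mulVec (AB : Matrix ι ι K) (AN : Matrix ι ν K) [Fintype ν]
    (cB u : ι → K) (cN : ν → K) :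
    -(cN - (ANᵀ * AB⁻¹ᵀ) *ᵥ cB) + (AB⁻¹ * AN)ᵀ *ᵥ u = ANᵀ *ᵥ (AB⁻¹ᵀ *ᵥ (cB + u)) - cN := by
  rw [transpose_mul, ← mulVec_mulVec, ← mulVec_mulVec, mulVec_add, mulVec_add]
  abel

theorem dotProduct_inv_mulVec_add (AB : Matrix ι ι K) (b cB u : ι → K) :
    cB ⬝ᵥ AB⁻¹ *ᵥ b + AB⁻¹ *ᵥ b ⬝ᵥ u = b ⬝ᵥ AB⁻¹ᵀ *ᵥ (cB + u) := by
  rw [mulVec_transpose, dotProduct_comm b, ← dotProduct_mulVec, add_dotProduct,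
    dotProduct_comm u]

theorem eq_fromCols_one_transpose_mulVec_sub_iff (A₀ : Matrix ι ν K) (c y : ν ⊕ ι → K)
    (hc : ∀ k, c (Sum.inr k) = 0) (s : ι → K) :
    y = (fromCols A₀ 1)ᵀ *ᵥ s - c ↔
      s = (fun k => y (Sum.inr k)) ∧
        (fun j => y (Sum.inl j)) = A₀ᵀ *ᵥ s - (fun j => c (Sum.inl j)) := by
  simp only [transpose_fromCols, fromRows_mulVec, transpose_one, one_mulVec, funext_iff,
    Sum.forall, Pi.sub_apply, Sum.elim_inl, Sum.elim_inr, hc, sub_zero]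
  simp only [eq_comm (a := s _), and_comm]

end Matrix

/-- Main theorem: the negative transpose of a primal dictionary is a dictionary for
the dual LP. With the setup `A = [A₀ I]`, `c` vanishing on slack coordinates,
basis `B` (via the ordered partition `e`) with `A_B` invertible, `Q = A_B⁻¹A_N`,
`p = A_B⁻¹b`, `q = c_N − A_Nᵀ A_B⁻ᵀ c_B`, `z* = c_Bᵀ A_B⁻¹ b`, the system
`y_N = −q + Qᵀ y_B`, `w = z* + pᵀ y_B` holds iff the initial dual dictionary
`y_N' = A₀ᵀ y_B' − c₀`, `w = bᵀ y_B'` holds. -/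
theorem dual_dictionary (m n : ℕ) (A₀ : Matrix (Fin m) (Fin n) ℝ) (b : Fin m → ℝ)
    (c : Fin n ⊕ Fin m → ℝ) (hc : ∀ k : Fin m, c (Sum.inr k) = 0)
    (e : Fin m ⊕ Fin n ≃ Fin n ⊕ Fin m)
    (A : Matrix (Fin m) (Fin n ⊕ Fin m) ℝ)
    (hA : A = Matrix.fromCols A₀ (1 : Matrix (Fin m) (Fin m) ℝ))
    (AB : Matrix (Fin m) (Fin m) ℝ) (hAB : AB = A.submatrix id (fun i => e (Sum.inl i)))
    (AN : Matrix (Fin m) (Fin n) ℝ) (hAN : AN = A.submatrix id (fun j => e (Sum.inr j)))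
    (hABu : IsUnit AB)
    (Q : Matrix (Fin m) (Fin n) ℝ) (hQ : Q = AB⁻¹ * AN)
    (p : Fin m → ℝ) (hp : p = AB⁻¹.mulVec b)
    (q : Fin n → ℝ)
    (hq : q = (fun j => c (e (Sum.inr j))) - (ANᵀ * AB⁻¹ᵀ).mulVec (fun i => c (e (Sum.inl i))))
    (zs : ℝ) (hzs : zs = (fun i => c (e (Sum.inl i))) ⬝ᵥ AB⁻¹.mulVec b)
    (y : Fin n ⊕ Fin m → ℝ) (w : ℝ) :
    ((fun j => y (e (Sum.inr j))) = -q + Qᵀ.mulVec (fun i => y (e (Sum.inl i))) ∧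
        w = zs + p ⬝ᵥ (fun i => y (e (Sum.inl i)))) ↔
      ((fun j => y (Sum.inl j)) = A₀ᵀ.mulVec (fun k => y (Sum.inr k)) -
          (fun j => c (Sum.inl j)) ∧
        w = b ⬝ᵥ (fun k => y (Sum.inr k))) := by
  subst hQ hp hq hzs
  set t := AB⁻¹ᵀ *ᵥ ((fun i => c (e (Sum.inl i))) + fun i => y (e (Sum.inl i)))
  have basic_rows : ∀ s, y = Aᵀ *ᵥ s - c ↔
      s = t ∧ (fun j => y (e (Sum.inr j))) = ANᵀ *ᵥ s - fun j => c (e (Sum.inr j)) := by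
    intro s
    rw [eq_transpose_mulVec_sub_iff_of_equiv_sum A e, ← hAB, ← hAN,
      eq_transpose_mulVec_sub_iff_of_isUnit hABu]
  have slack_rows : ∀ s, y = Aᵀ *ᵥ s - c ↔
      s = (fun k => y (Sum.inr k)) ∧
        (fun j => y (Sum.inl j)) = A₀ᵀ *ᵥ s - (fun j => c (Sum.inl j)) := by
    rw [hA]
    exact eq_fromCols_one_transpose_mulVec_sub_iff A₀ c y hc
  calc _ ↔ ∃ s, y = Aᵀ *ᵥ s - c ∧ w = b ⬝ᵥ s := by
        simp only [basic_rows, and_assoc, exists_eq_left, neg_sub_add_transpose_mulVec,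
          dotProduct_inv_mulVec_add, t]
    _ ↔ _ := by simp only [slack_rows, and_assoc, exists_eq_left]
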